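/- arXiv:1302.0585 — 5 statements merged into one kernel-verified Lean document; each statement's English description precedes it below -/
import Mathlib

section
/- Let h, P, σ² > 0 and λ > 0 with h·P > 1/λ − σ² and λ·σ² ≤ 1. Then the function L(α) = log(1 + α·h·P/σ²) + λ·(1 − α)·h·P attains its maximum over α ∈ [0,1] at α* = 1/(λhP) − σ²/(hP), and the corresponding power allocated to information decoding is α*·h·P = 1/λ − σ², a constant independent of h. -/
/-!
Substituting `t = 1 + α s / σ²` (with `s = h P`) turns `L` into `log t - λ σ² t` plus a constant,
and `log t - c t ≤ log c⁻¹ - 1` is `log x ≤ x - 1` at `x = c t`. The bound is attained at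
`t = (λ σ²)⁻¹`, i.e. at `α s = 1 / λ - σ²`.
-/

open Real Set

lemma Real.log_sub_mul_le {c t : ℝ} (hc : 0 < c) (ht : 0 < t) :
    log t - c * t ≤ log c⁻¹ - 1 := by
  have key := log_le_sub_one_of_pos (mul_pos hc ht)
  rw [log_mul hc.ne' ht.ne'] at key
  rw [log_inv]
  linarith

lemma log_one_add_div_add_mul_le_of_mul_eq {s σ2 lam α β : ℝ} (hσ : 0 < σ2) (hlam : 0 < lam)
    (hα : 0 < 1 + α * s / σ2) (hβ : β * s = 1 / lam - σ2) :
    log (1 + α * s / σ2) + lam * (1 - α) * s ≤ log (1 + β * s / σ2) + lam * (1 - β) * s := by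
  have hc : 0 < lam * σ2 := mul_pos hlam hσ
  have hβt : 1 + β * s / σ2 = (lam * σ2)⁻¹ := by
    rw [hβ]
    field_simp
    ring
  have hαs : α * s = σ2 * (1 + α * s / σ2 - 1) := by
    field_simp
    ring
  have key := log_sub_mul_le hc hα
  rw [hβt]
  calc log (1 + α * s / σ2) + lam * (1 - α) * s
      = log (1 + α * s / σ2) - lam * σ2 * (1 + α * s / σ2) + lam * σ2 + lam * s := by
        linear_combination (-lam) * hαs
    _ ≤ log (lam * σ2)⁻¹ - 1 + lam * σ2 + lam * s := by linarith
    _ = log (lam * σ2)⁻¹ + lam * (1 - β) * s := by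
        linear_combination lam * hβ + mul_inv_cancel₀ hlam.ne'

theorem stmt1_general (h P σ2 lam : ℝ) (hh : 0 < h) (hP : 0 < P) (hσ : 0 < σ2)
    (hlam : 0 < lam) :
    IsMaxOn (fun α : ℝ => Real.log (1 + α * h * P / σ2) + lam * (1 - α) * h * P)
      (Set.Icc 0 1) (1 / (lam * h * P) - σ2 / (h * P)) ∧
    (1 / (lam * h * P) - σ2 / (h * P)) * h * P = 1 / lam - σ2 := by
  have hstar : (1 / (lam * h * P) - σ2 / (h * P)) * h * P = 1 / lam - σ2 := by
    field_simp
  refine ⟨fun α hα => ?_, hstar⟩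
  have hα_pos : 0 < 1 + α * (h * P) / σ2 := by
    have : 0 ≤ α * (h * P) / σ2 := by have := hα.1; positivity
    linarith
  have key := log_one_add_div_add_mul_le_of_mul_eq (β := 1 / (lam * h * P) - σ2 / (h * P)) hσ hlam hα_pos
    (by rw [← hstar]; ring)
  simp only [← mul_assoc] at key
  exact key

theorem stmt1 (h P σ2 lam : ℝ) (hh : 0 < h) (hP : 0 < P) (hσ : 0 < σ2)
    (hlam : 0 < lam) (hcond : h * P > 1 / lam - σ2) (hls : lam * σ2 ≤ 1) :
    IsMaxOn (fun α : ℝ => Real.log (1 + α * h * P / σ2) + lam * (1 - α) * h * P)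
      (Set.Icc 0 1) (1 / (lam * h * P) - σ2 / (h * P)) ∧
    (1 / (lam * h * P) - σ2 / (h * P)) * h * P = 1 / lam - σ2 :=
  stmt1_general h P σ2 lam hh hP hσ hlam
end

section
/- Let M ≥ 1, let h₁, …, h_M > 0, P > 0, σ² > 0, λ > 0. Then the maximum over (α₁, …, α_M) ∈ [0,1]^M of F(α₁,…,α_M) = log(1 + (Σ_{m=1}^M α_m h_m P)/σ²) + λ·Σ_{m=1}^M (1 − α_m) h_m P equals the maximum over α ∈ [0,1] of G(α) = log(1 + α·(Σ_{m=1}^M h_m) P/σ²) + λ·(1 − α)·(Σ_{m=1}^M h_m) P. -/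
/-!
Both objectives are the same function `φ` of the received signal power: `F a = φ (∑ aₘ hₘ)` and
`G α = φ (α ∑ hₘ)`. As `a` ranges over the cube and `α` over `[0, 1]`, these arguments sweep out the
same set, so the two images, and hence their suprema, coincide.
-/

open Real Set

/-- The witness is the weighted mean `(∑ aᵢ wᵢ) / ∑ wᵢ`; when `∑ wᵢ = 0` this is the junk value `0`,
which still works because then `∑ aᵢ wᵢ = 0` as well. -/
theorem exists_mem_Icc_mul_sum_eq_sum_mul {ι : Type*} [Fintype ι] {w : ι → ℝ}
    (hw : ∀ i, 0 ≤ w i) {a : ι → ℝ} (ha : a ∈ Icc 0 1) :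
    ∃ α ∈ Icc (0 : ℝ) 1, α * ∑ i, w i = ∑ i, a i * w i := by
  have hlo : 0 ≤ ∑ i, a i * w i := Finset.sum_nonneg fun i _ => mul_nonneg (ha.1 i) (hw i)
  have hhi : ∑ i, a i * w i ≤ ∑ i, w i :=
    Finset.sum_le_sum fun i _ => mul_le_of_le_one_left (hw i) (ha.2 i)
  have hS : 0 ≤ ∑ i, w i := hlo.trans hhi
  refine ⟨(∑ i, a i * w i) / ∑ i, w i, ⟨div_nonneg hlo hS, div_le_one_of_le₀ hhi hS⟩, ?_⟩
  exact div_mul_cancel_of_imp fun hS0 => le_antisymm (hS0 ▸ hhi) hlo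

theorem image_Icc_sum_mul_eq_image_Icc_mul_sum {ι : Type*} [Fintype ι] {w : ι → ℝ}
    (hw : ∀ i, 0 ≤ w i) :
    (fun a : ι → ℝ => ∑ i, a i * w i) '' Icc 0 1 = (fun α : ℝ => α * ∑ i, w i) '' Icc 0 1 := by
  apply Subset.antisymm
  · rintro _ ⟨a, ha, rfl⟩
    exact exists_mem_Icc_mul_sum_eq_sum_mul hw ha
  · rintro _ ⟨α, hα, rfl⟩
    exact ⟨fun _ => α, ⟨fun _ => hα.1, fun _ => hα.2⟩, by simp only [Finset.mul_sum]⟩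

theorem stmt8_general (M : ℕ) (h : Fin M → ℝ) (P σ2 lam : ℝ)
    (hh : ∀ m, 0 < h m) :
    sSup ((fun a : Fin M → ℝ =>
        Real.log (1 + (∑ m, a m * h m * P) / σ2) + lam * ∑ m, (1 - a m) * h m * P) ''
      Set.Icc 0 1) =
    sSup ((fun α : ℝ =>
        Real.log (1 + α * (∑ m, h m) * P / σ2) + lam * (1 - α) * (∑ m, h m) * P) ''
      Set.Icc 0 1) := by
  set φ : ℝ → ℝ := fun x => Real.log (1 + x * P / σ2) + lam * ((∑ m, h m) - x) * P
  have hF : (fun a : Fin M → ℝ =>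
      Real.log (1 + (∑ m, a m * h m * P) / σ2) + lam * ∑ m, (1 - a m) * h m * P) =
      φ ∘ fun a => ∑ m, a m * h m := by
    funext a
    simp only [φ, Function.comp_apply, ← Finset.sum_mul, sub_mul, one_mul, Finset.sum_sub_distrib]
    ring
  have hG : (fun α : ℝ =>
      Real.log (1 + α * (∑ m, h m) * P / σ2) + lam * (1 - α) * (∑ m, h m) * P) =
      φ ∘ fun α => α * ∑ m, h m := by
    funext α
    simp only [φ, Function.comp_apply]
    ring
  rw [hF, hG, image_comp, image_comp, image_Icc_sum_mul_eq_image_Icc_mul_sum fun m => (hh m).le]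

theorem stmt8 (M : ℕ) (hM : 1 ≤ M) (h : Fin M → ℝ) (P σ2 lam : ℝ)
    (hh : ∀ m, 0 < h m) (hP : 0 < P) (hσ : 0 < σ2) (hlam : 0 < lam) :
    sSup ((fun a : Fin M → ℝ =>
        Real.log (1 + (∑ m, a m * h m * P) / σ2) + lam * ∑ m, (1 - a m) * h m * P) ''
      Set.Icc 0 1) =
    sSup ((fun α : ℝ =>
        Real.log (1 + α * (∑ m, h m) * P / σ2) + lam * (1 - α) * (∑ m, h m) * P) ''
      Set.Icc 0 1) :=
  stmt8_general M h P σ2 lam hh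
end

section
/- Let M ≥ 1, h₁, …, h_M > 0, σ² > 0, λ > 0, β > 0, P_peak > 0. Then the maximum over p ∈ [0, P_peak] and (α₁,…,α_M) ∈ [0,1]^M of log(1 + (Σ_m α_m h_m p)/σ²) + λ·Σ_m (1 − α_m) h_m p − β·p equals the maximum over p ∈ [0, P_peak] and α ∈ [0,1] of log(1 + α·(Σ_m h_m)·p/σ²) + λ·(1 − α)·(Σ_m h_m)·p − β·p. -/
open Real Set

theorem stmt9 (M : ℕ) (hM : 1 ≤ M) (h : Fin M → ℝ) (σ2 lam beta Ppeak : ℝ)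
    (hh : ∀ m, 0 < h m) (hσ : 0 < σ2) (hlam : 0 < lam) (hbeta : 0 < beta)
    (hPp : 0 < Ppeak) :
    sSup ((fun pa : ℝ × (Fin M → ℝ) =>
        Real.log (1 + (∑ m, pa.2 m * h m * pa.1) / σ2)
          + lam * ∑ m, (1 - pa.2 m) * h m * pa.1 - beta * pa.1) ''
      (Set.Icc 0 Ppeak ×ˢ Set.Icc 0 1)) =
    sSup ((fun pα : ℝ × ℝ =>
        Real.log (1 + pα.2 * (∑ m, h m) * pα.1 / σ2)
          + lam * (1 - pα.2) * (∑ m, h m) * pα.1 - beta * pα.1) ''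
      (Set.Icc 0 Ppeak ×ˢ Set.Icc 0 1)) := by
  have hNe : Nonempty (Fin M) := Fin.pos_iff_nonempty.mp hM
  have hH : 0 < ∑ m, h m :=
    Finset.sum_pos (fun m _ => hh m) Finset.univ_nonempty
  congr 1
  ext y
  simp only [Set.mem_image, Set.mem_prod, Set.mem_Icc, Prod.exists]
  constructor
  · rintro ⟨p, a, ⟨hp, ha⟩, rfl⟩
    have ha0 : (0 : Fin M → ℝ) ≤ a := ha.1
    have ha1 : a ≤ 1 := ha.2
    set S := ∑ m, a m * h m with hS
    have hS0 : 0 ≤ S := Finset.sum_nonneg fun m _ =>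
      mul_nonneg (ha0 m) (hh m).le
    have hSH : S ≤ ∑ m, h m := Finset.sum_le_sum fun m _ =>
      mul_le_of_le_one_left (hh m).le (by simpa using ha1 m)
    have key : S / (∑ m, h m) * (∑ m, h m) = S := div_mul_cancel₀ _ hH.ne'
    have e1 : ∑ m, a m * h m * p = S * p := (Finset.sum_mul _ _ _).symm
    have e2 : ∑ m, (1 - a m) * h m * p = ((∑ m, h m) - S) * p := by
      rw [hS, sub_mul, Finset.sum_mul, Finset.sum_mul, ← Finset.sum_sub_distrib]
      exact Finset.sum_congr rfl fun m _ => by ring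
    refine ⟨p, S / (∑ m, h m), ⟨hp, div_nonneg hS0 hH.le,
      (div_le_one hH).mpr hSH⟩, ?_⟩
    rw [key, e1, e2]
    have g2 : lam * (1 - S / (∑ m, h m)) * (∑ m, h m) * p
        = lam * (((∑ m, h m) - S) * p) := by
      field_simp
    rw [g2]
  · rintro ⟨p, α, ⟨hp, hα⟩, rfl⟩
    refine ⟨p, fun _ => α, ⟨hp, fun m => hα.1, fun m => hα.2⟩, ?_⟩
    have e1 : ∑ m, α * h m * p = α * (∑ m, h m) * p := by
      rw [← Finset.sum_mul, ← Finset.mul_sum]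
    have e2 : ∑ m, (1 - α) * h m * p = (1 - α) * (∑ m, h m) * p := by
      rw [← Finset.sum_mul, ← Finset.mul_sum]
    rw [e1, e2]
    ring
end

section
/- Let c > 0, λ > 0, σ² > 0. The maximum over α ∈ [0,1] of L(α) = log(1 + α·c/σ²) + λ·(1 − α)·c satisfies: the optimal α* is given by α* = min(1, max(0, 1/(λc) − σ²/c)), and when λσ² ≤ 1 the power α*·c equals min(c, 1/λ − σ²). -/
open Real Set

lemma log_sub_log_le (a b : ℝ) (ha : 0 < a) (hb : 0 < b) :
    Real.log a - Real.log b ≤ a / b - 1 := by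
  rw [← Real.log_div ha.ne' hb.ne']
  exact Real.log_le_sub_one_of_pos (div_pos ha hb)

lemma rewrite_log (a c σ2 : ℝ) (ha : 0 ≤ a) (hc : 0 ≤ c) (hσ : 0 < σ2) :
    Real.log (1 + a * c / σ2) = Real.log (σ2 + a * c) - Real.log σ2 := by
  have h : 1 + a * c / σ2 = (σ2 + a * c) / σ2 := by field_simp
  have hpos : (0:ℝ) < σ2 + a * c := by positivity
  rw [h, Real.log_div hpos.ne' hσ.ne']

theorem stmt10 (c lam σ2 : ℝ) (hc : 0 < c) (hlam : 0 < lam) (hσ : 0 < σ2) :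
    IsMaxOn (fun α : ℝ => Real.log (1 + α * c / σ2) + lam * (1 - α) * c)
      (Set.Icc 0 1) (min 1 (max 0 (1 / (lam * c) - σ2 / c))) ∧
    (lam * σ2 ≤ 1 →
      (min 1 (max 0 (1 / (lam * c) - σ2 / c))) * c = min c (1 / lam - σ2)) := by
  set x := 1 / (lam * c) - σ2 / c with hxdef
  constructor
  · intro α hα
    obtain ⟨hα0, hα1⟩ := hα
    set A := min 1 (max 0 x) with hAdef
    have hA0 : 0 ≤ A := le_min (by norm_num) (le_max_left _ _)
    have hσα : 0 < σ2 + α * c := by positivity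
    have hσA : 0 < σ2 + A * c := by positivity
    -- key inequality: log(σ2+αc) - log(σ2+Ac) ≤ lam*c*(α-A)
    have key : Real.log (σ2 + α * c) - Real.log (σ2 + A * c) ≤ lam * c * (α - A) := by
      have hlog := log_sub_log_le (σ2 + α * c) (σ2 + A * c) hσα hσA
      have h2 : (σ2 + α * c) / (σ2 + A * c) - 1 = (α - A) * c / (σ2 + A * c) := by
        field_simp; ring
      rw [h2] at hlog
      refine hlog.trans ?_
      rw [div_le_iff₀ hσA]
      rcases le_or_gt x 0 with hx0 | hx0
      · -- A = 0, and 1 ≤ lam * σ2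
        have hA : A = 0 := by simp [hAdef, max_eq_left hx0]
        have h1 : 1 ≤ lam * σ2 := by
          rw [hxdef] at hx0
          have : 1 / (lam * c) ≤ σ2 / c := by linarith
          rw [div_le_div_iff₀ (by positivity) hc] at this
          nlinarith
        rw [hA]
        nlinarith [mul_nonneg hα0 hc.le]
      rcases le_or_gt 1 x with hx1 | hx1
      · -- A = 1, lam * (σ2 + c) ≤ 1
        have hA : A = 1 := min_eq_left (le_max_of_le_right hx1)
        have h1 : lam * (σ2 + c) ≤ 1 := by
          rw [hxdef] at hx1
          have : σ2 / c + 1 ≤ 1 / (lam * c) := by linarith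
          rw [div_add' _ _ _ hc.ne', div_le_div_iff₀ hc (by positivity)] at this
          nlinarith
        rw [hA]
        nlinarith [mul_nonneg (sub_nonneg.mpr hα1) hc.le, sub_nonpos.mpr hα1]
      · -- A = x, σ2 + A*c = 1/lam
        have hA : A = x := by
          rw [hAdef, max_eq_right hx0.le, min_eq_right hx1.le]
        have hAc : σ2 + A * c = 1 / lam := by
          rw [hA, hxdef]
          field_simp
          ring
        rw [hAc]
        have : lam * c * (α - A) * (1 / lam) = c * (α - A) := by
          field_simp
        rw [this]
        nlinarith
    simp only [Set.mem_setOf_eq, rewrite_log _ c σ2 hα0 hc.le hσ,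
      rewrite_log _ c σ2 hA0 hc.le hσ]
    linarith
  · intro h
    have hx0 : 0 ≤ x := by
      rw [hxdef, sub_nonneg, div_le_div_iff₀ hc (by positivity)]
      nlinarith
    rw [max_eq_right hx0]
    have hxc : x * c = 1 / lam - σ2 := by
      rw [hxdef]; field_simp
    rw [min_mul_of_nonneg _ _ hc.le, one_mul, hxc]
end

section
/- Let h, σ², λ, β, P_peak > 0 with λσ² < 1 and 1/(λh) − σ²/h < p ≤ P_peak. Then the maximum over α ∈ [0,1] of L(p,α) = log(1 + αhp/σ²) + λ(1−α)hp − βp is attained at α* = 1/(λhp) − σ²/(hp) ∈ (0,1), and the maximum value equals log(1/(λσ²)) + λhp − βp + λσ² − 1. -/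
open Real Set

theorem stmt16 (h σ2 lam beta Ppeak p : ℝ) (hh : 0 < h) (hσ : 0 < σ2)
    (hlam : 0 < lam) (hbeta : 0 < beta) (hPp : 0 < Ppeak) (hls : lam * σ2 < 1)
    (hp1 : 1 / (lam * h) - σ2 / h < p) (hp2 : p ≤ Ppeak) :
    (1 / (lam * h * p) - σ2 / (h * p)) ∈ Set.Ioo (0:ℝ) 1 ∧
    IsMaxOn (fun α : ℝ => Real.log (1 + α * h * p / σ2) + lam * (1 - α) * h * p - beta * p)
      (Set.Icc 0 1) (1 / (lam * h * p) - σ2 / (h * p)) ∧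
    Real.log (1 + (1 / (lam * h * p) - σ2 / (h * p)) * h * p / σ2)
        + lam * (1 - (1 / (lam * h * p) - σ2 / (h * p))) * h * p - beta * p =
      Real.log (1 / (lam * σ2)) + lam * h * p - beta * p + lam * σ2 - 1 := by
  have h1 : 0 < 1 - lam * σ2 := by linarith
  have hkey : 1 / (lam * h) - σ2 / h = (1 - lam * σ2) / (lam * h) := by
    field_simp
  have hp0 : 0 < p := lt_trans (by rw [hkey]; positivity) hp1
  set a : ℝ := 1 / (lam * h * p) - σ2 / (h * p) with ha
  have hakey : a = (1 - lam * σ2) / (lam * h * p) := by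
    rw [ha]; field_simp
  have ha0 : 0 < a := by rw [hakey]; positivity
  have hup : (1 - lam * σ2) / (lam * h) < p := by rw [← hkey]; exact hp1
  have ha1 : a < 1 := by
    rw [hakey, div_lt_one (by positivity)]
    rw [div_lt_iff₀ (by positivity)] at hup
    nlinarith
  have harg : 1 + a * h * p / σ2 = 1 / (lam * σ2) := by
    rw [hakey]; field_simp; ring
  have hlin : lam * (1 - a) * h * p = lam * h * p + lam * σ2 - 1 := by
    rw [hakey]; field_simp; ring
  have hloginv : Real.log (1 / (lam * σ2)) = - Real.log (lam * σ2) := by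
    rw [one_div, Real.log_inv]
  refine ⟨⟨ha0, ha1⟩, ?_, by rw [harg, hlin]; ring⟩
  intro α hα
  simp only [Set.mem_setOf_eq]
  have hα0 : (0:ℝ) ≤ α := hα.1
  have hx : 0 < 1 + α * h * p / σ2 := by positivity
  have hy : 0 < lam * σ2 * (1 + α * h * p / σ2) := by positivity
  have hlogy := Real.log_le_sub_one_of_pos hy
  have hsplit : Real.log (lam * σ2 * (1 + α * h * p / σ2)) =
      Real.log (lam * σ2) + Real.log (1 + α * h * p / σ2) :=
    Real.log_mul (by positivity) (ne_of_gt hx)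
  have hcancel : lam * σ2 * (1 + α * h * p / σ2) = lam * σ2 + lam * α * h * p := by
    field_simp
  rw [harg, hlin, hloginv]
  rw [hsplit, hcancel] at hlogy
  linarith
end
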